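/- arXiv:2408.02812 — 4 statements merged into one kernel-verified Lean document; each statement's English description precedes it below -/
import Mathlib

section
/- Let X ⊆ ℝ^d, ε ∈ (0,1), and let 𝒞 be a finite (ε/40)-cover of the unit secant set S_X. Suppose Π : ℝ^d → ℝ^m is a linear map providing (ε/240)-convex-hull distortion for S_X. Fix u ∈ ℝ^d with nearest point u_NN in the closure of X, and suppose u′ ∈ ℝ^m satisfies ‖u′‖ ≤ ‖u − u_NN‖ and |⟨u′, Π w⟩ − ⟨u − u_NN, w⟩| ≤ (ε/30)‖u − u_NN‖ for all w ∈ 𝒞. Then for all x ∈ X, |⟨u′, Π(x − u_NN)⟩ − ⟨u − u_NN, x − u_NN⟩| ≤ (ε/10)‖u − u_NN‖‖x − u_NN‖. -/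
open scoped RealInnerProductSpace

/-- if the cover condition (ε/30) holds for all points of a finite (ε/40)-cover of
the unit secants `S_X`, and `P` provides (ε/240)-convex-hull distortion for `S_X`, then the
angle-preservation condition holds with constant ε/10 for all `x ∈ X`. -/
theorem stmt4 {d m : ℕ} (X : Set (EuclideanSpace ℝ (Fin d))) (ε : ℝ) (hε : ε ∈ Set.Ioo (0:ℝ) 1)
    (SX : Set (EuclideanSpace ℝ (Fin d)))
    (hSX : SX = closure {s : EuclideanSpace ℝ (Fin d) |
      ∃ x ∈ X, ∃ y ∈ X, x ≠ y ∧ s = ‖x - y‖⁻¹ • (x - y)})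
    (C : Finset (EuclideanSpace ℝ (Fin d))) (hCsub : (C : Set (EuclideanSpace ℝ (Fin d))) ⊆ SX)
    (hCcover : ∀ s ∈ SX, ∃ w ∈ C, ‖s - w‖ ≤ ε / 40)
    (P : EuclideanSpace ℝ (Fin d) →ₗ[ℝ] EuclideanSpace ℝ (Fin m))
    (hP : ∀ s ∈ convexHull ℝ SX, |‖P s‖ - ‖s‖| < ε / 240)
    (u uNN : EuclideanSpace ℝ (Fin d))
    (huNN : uNN ∈ closure X ∧ ∀ x ∈ closure X, ‖u - uNN‖ ≤ ‖u - x‖)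
    (u' : EuclideanSpace ℝ (Fin m)) (hu'norm : ‖u'‖ ≤ ‖u - uNN‖)
    (hu'cover : ∀ w ∈ C, |⟪u', P w⟫ - ⟪u - uNN, w⟫| ≤ (ε / 30) * ‖u - uNN‖) :
    ∀ x ∈ X, |⟪u', P (x - uNN)⟫ - ⟪u - uNN, x - uNN⟫| ≤
      (ε / 10) * ‖u - uNN‖ * ‖x - uNN‖ := by
  obtain ⟨hε0, hε1⟩ := hε
  intro x hx
  by_cases hxu : x = uNN
  · simp [hxu]
  have hxne : x - uNN ≠ 0 := sub_ne_zero.mpr hxu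
  set a := u - uNN with ha
  set r := ‖x - uNN‖ with hr
  have hrpos : (0:ℝ) < r := norm_pos_iff.mpr hxne
  set s : EuclideanSpace ℝ (Fin d) := ‖x - uNN‖⁻¹ • (x - uNN) with hs
  -- s belongs to SX
  have hcont : ContinuousAt (fun y : EuclideanSpace ℝ (Fin d) => ‖x - y‖⁻¹ • (x - y)) uNN := by
    have h1 : ContinuousAt (fun y : EuclideanSpace ℝ (Fin d) => x - y) uNN :=
      (continuous_const.sub continuous_id).continuousAt
    exact (h1.norm.inv₀ (by simpa using norm_ne_zero_iff.mpr hxne)).smul h1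
  have hclos : uNN ∈ closure (X \ {x}) := by
    have huNN1 := huNN.1
    rw [mem_closure_iff_nhds] at huNN1 ⊢
    intro t ht
    obtain ⟨y, hy⟩ := huNN1 (t ∩ {x}ᶜ)
      (Filter.inter_mem ht (compl_singleton_mem_nhds fun h => hxu h.symm))
    exact ⟨y, hy.1.1, hy.2, hy.1.2⟩
  have hsmem : s ∈ SX := by
    rw [hSX]
    have himg := (hcont.continuousWithinAt).mem_closure_image hclos
    refine closure_mono ?_ himg
    rintro _ ⟨y, ⟨hyX, hyx⟩, rfl⟩
    exact ⟨x, hx, y, hyX, fun h => hyx (by simp [h.symm]), rfl⟩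
  -- SX is symmetric
  have hneg : ∀ v ∈ SX, -v ∈ SX := by
    intro v hv
    rw [hSX] at hv ⊢
    refine map_mem_closure continuous_neg hv ?_
    rintro _ ⟨p, hp, q, hq, hpq, rfl⟩
    refine ⟨q, hq, p, hp, hpq.symm, ?_⟩
    rw [← smul_neg, neg_sub, norm_sub_rev]
  obtain ⟨w, hwC, hws⟩ := hCcover s hsmem
  have hwSX : w ∈ SX := hCsub hwC
  -- midpoint in convex hull
  have hm : (1/2:ℝ) • s + (1/2:ℝ) • (-w) ∈ convexHull ℝ SX :=
    (convex_convexHull ℝ SX) (subset_convexHull ℝ SX hsmem)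
      (subset_convexHull ℝ SX (hneg w hwSX)) (by norm_num) (by norm_num) (by norm_num)
  have key : ‖P (s - w)‖ ≤ ε / 30 := by
    have h1 := hP _ hm
    have e1 : (1/2:ℝ) • s + (1/2:ℝ) • (-w) = (1/2:ℝ) • (s - w) := by
      rw [smul_neg, ← sub_eq_add_neg, ← smul_sub]
    rw [e1, map_smul, norm_smul, norm_smul, Real.norm_eq_abs] at h1
    rw [abs_lt] at h1
    have h2 := h1.2
    have habs : |(1:ℝ)/2| = 1/2 := by norm_num
    rw [habs] at h2
    linarith
  have hxs : x - uNN = r • s := by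
    rw [hs, smul_smul, mul_inv_cancel₀ (ne_of_gt hrpos), one_smul]
  have hinner : |⟪u', P s⟫ - ⟪a, s⟫| ≤ (ε/10) * ‖a‖ := by
    have cs1 : |⟪u', P (s - w)⟫| ≤ ‖u'‖ * ‖P (s - w)‖ := abs_real_inner_le_norm _ _
    have cs2 : |⟪a, w - s⟫| ≤ ‖a‖ * ‖w - s‖ := abs_real_inner_le_norm _ _
    have hw2 := hu'cover w hwC
    have hws' : ‖w - s‖ ≤ ε / 40 := by rwa [norm_sub_rev]
    have split : ⟪u', P s⟫ - ⟪a, s⟫ =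
        ⟪u', P (s - w)⟫ + (⟪u', P w⟫ - ⟪a, w⟫) + ⟪a, w - s⟫ := by
      rw [map_sub]
      simp only [inner_sub_right]
      ring
    rw [split]
    have b1 : |⟪u', P (s - w)⟫| ≤ ‖a‖ * (ε/30) := by
      calc |⟪u', P (s - w)⟫| ≤ ‖u'‖ * ‖P (s - w)‖ := cs1
        _ ≤ ‖a‖ * (ε/30) :=
          mul_le_mul hu'norm key (norm_nonneg _) ((norm_nonneg u').trans hu'norm)
    have b2 : |⟪a, w - s⟫| ≤ ‖a‖ * (ε/40) :=
      cs2.trans (mul_le_mul_of_nonneg_left hws' (norm_nonneg _))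
    have htri := abs_add_le (⟪u', P (s - w)⟫ + (⟪u', P w⟫ - ⟪a, w⟫)) ⟪a, w - s⟫
    have htri2 := abs_add_le ⟪u', P (s - w)⟫ (⟪u', P w⟫ - ⟪a, w⟫)
    have hna : (0:ℝ) ≤ ‖a‖ := norm_nonneg _
    nlinarith
  calc |⟪u', P (x - uNN)⟫ - ⟪a, x - uNN⟫|
      = r * |⟪u', P s⟫ - ⟪a, s⟫| := by
        rw [hxs, map_smul, real_inner_smul_right, real_inner_smul_right, ← mul_sub,
          abs_mul, abs_of_pos hrpos]
    _ ≤ r * ((ε/10) * ‖a‖) := mul_le_mul_of_nonneg_left hinner hrpos.le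
    _ = (ε/10) * ‖a‖ * r := by ring
end

section
/- Let x_1,…,x_n ∈ ℝ^d \ {0} and suppose Π ∈ ℝ^{m×d} provides ε-convex-hull distortion for V = {± x_i/‖x_i‖ : i = 1,…,n}. Then for any u ∈ ℝ^d there exists u′ ∈ ℝ^m with ‖u′‖ ≤ ‖u‖ and |⟨u′, Π x_i⟩ − ⟨u, x_i⟩| ≤ ε‖u‖‖x_i‖ for every i = 1,…,n. -/
open scoped RealInnerProductSpace

set_option maxHeartbeats 1000000

private lemma aux_nonpos {c K : ℝ} (h : ∀ R : ℝ, 0 < R → R * c < K) : c ≤ 0 := by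
  by_contra hc
  push_neg at hc
  have hR : (0:ℝ) < max 1 (K / c) := lt_of_lt_of_le one_pos (le_max_left _ _)
  have h1 := h (max 1 (K / c)) hR
  have h2 : K / c ≤ max 1 (K / c) := le_max_right _ _
  rw [div_le_iff₀ hc] at h2
  linarith

/-- existence of the dual extension point `u'` (Narayanan–Nelson Lemma 3.6). -/
theorem stmt6 {d m n : ℕ} (x : Fin n → EuclideanSpace ℝ (Fin d)) (hx : ∀ i, x i ≠ 0)
    (ε : ℝ) (P : EuclideanSpace ℝ (Fin d) →ₗ[ℝ] EuclideanSpace ℝ (Fin m))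
    (hP : ∀ s ∈ convexHull ℝ {v : EuclideanSpace ℝ (Fin d) |
        ∃ i, v = ‖x i‖⁻¹ • x i ∨ v = -(‖x i‖⁻¹ • x i)},
      |‖P s‖ - ‖s‖| < ε)
    (u : EuclideanSpace ℝ (Fin d)) :
    ∃ u' : EuclideanSpace ℝ (Fin m), ‖u'‖ ≤ ‖u‖ ∧
      ∀ i, |⟪u', P (x i)⟫ - ⟪u, x i⟫| ≤ ε * ‖u‖ * ‖x i‖ := by
  classical
  rcases Nat.eq_zero_or_pos n with hn | hn
  · subst hn
    exact ⟨0, by simp, fun i => i.elim0⟩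
  set V : Set (EuclideanSpace ℝ (Fin d)) :=
    {v : EuclideanSpace ℝ (Fin d) | ∃ i, v = ‖x i‖⁻¹ • x i ∨ v = -(‖x i‖⁻¹ • x i)} with hVdef
  set L : ℝ := ‖u‖ with hLdef
  have hL : 0 ≤ L := norm_nonneg u
  set v : Fin n → EuclideanSpace ℝ (Fin d) := fun i => ‖x i‖⁻¹ • x i with hvdef
  set w : Fin n × Bool → EuclideanSpace ℝ (Fin d) :=
    fun j => if j.2 then v j.1 else -v j.1 with hwdef
  have hwV : ∀ j, w j ∈ V := by
    intro j
    refine ⟨j.1, ?_⟩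
    cases hb : j.2 <;> simp [hwdef, hvdef, hb]
  set y : Fin n × Bool → EuclideanSpace ℝ (Fin m) := fun j => P (w j) with hydef
  set c : Fin n × Bool → ℝ := fun j => ⟪u, w j⟫ - ε * L with hcdef
  -- key inequality
  have key : ∀ lam : Fin n × Bool → ℝ, (∀ j, 0 ≤ lam j) → (∑ j, lam j) = 1 →
      ∑ j, lam j * c j ≤ L * ‖∑ j, lam j • y j‖ := by
    intro lam h0 h1
    set z : EuclideanSpace ℝ (Fin d) := ∑ j, lam j • w j with hz
    have hzmem : z ∈ convexHull ℝ V :=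
      (convex_convexHull ℝ V).sum_mem (fun j _ => h0 j) h1
        (fun j _ => subset_convexHull ℝ V (hwV j))
    have hz2 := hP z hzmem
    have hz3 : ‖z‖ ≤ ‖P z‖ + ε := by
      have := abs_lt.mp hz2; linarith [this.1]
    have h4 : ∑ j, lam j * c j = ⟪u, z⟫ - ε * L := by
      simp only [hcdef, mul_sub, Finset.sum_sub_distrib, hz, inner_sum,
        real_inner_smul_right]
      rw [← Finset.sum_mul, h1]; ring
    have h5 : P z = ∑ j, lam j • y j := by
      simp [hz, map_sum, map_smul, hydef]
    have h6 : ⟪u, z⟫ ≤ L * ‖z‖ := real_inner_le_norm u z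
    have h7 : L * ‖z‖ ≤ L * (‖P z‖ + ε) := mul_le_mul_of_nonneg_left hz3 hL
    rw [h4, ← h5]
    nlinarith
  -- the two convex sets
  set U : Set (EuclideanSpace ℝ (Fin m) × ℝ) := {p | L * ‖p.1‖ < p.2} with hUdef
  have hUopen : IsOpen U :=
    isOpen_lt (continuous_const.mul continuous_fst.norm) continuous_snd
  have hUconv : Convex ℝ U := by
    intro p hp q hq a b ha hb hab
    simp only [hUdef, Set.mem_setOf_eq] at hp hq ⊢
    have h1 : ‖(a • p + b • q).1‖ ≤ a * ‖p.1‖ + b * ‖q.1‖ := by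
      calc ‖a • p.1 + b • q.1‖ ≤ ‖a • p.1‖ + ‖b • q.1‖ := norm_add_le _ _
        _ = a * ‖p.1‖ + b * ‖q.1‖ := by
            rw [norm_smul, norm_smul, Real.norm_eq_abs, Real.norm_eq_abs,
              abs_of_nonneg ha, abs_of_nonneg hb]
    have h2 : (a • p + b • q).2 = a * p.2 + b * q.2 := rfl
    rw [h2]
    have hab' : L * ‖(a • p + b • q).1‖ ≤ a * (L * ‖p.1‖) + b * (L * ‖q.1‖) := by
      nlinarith [mul_le_mul_of_nonneg_left h1 hL]
    have h3 : a * (L * ‖p.1‖) + b * (L * ‖q.1‖) < a * p.2 + b * q.2 := by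
      rcases lt_or_eq_of_le ha with ha' | ha'
      · have e1 := mul_lt_mul_of_pos_left hp ha'
        have e2 := mul_le_mul_of_nonneg_left hq.le hb
        linarith
      · have hb1 : b = 1 := by linarith
        rw [← ha', hb1]
        simpa using hq
    linarith
  -- the linear map building C
  set T : ((Fin n × Bool → ℝ) × ℝ) →ₗ[ℝ] EuclideanSpace ℝ (Fin m) × ℝ :=
    ((Fintype.linearCombination ℝ y).comp
        (LinearMap.fst ℝ (Fin n × Bool → ℝ) ℝ)).prod
      (((Fintype.linearCombination ℝ c).comp
        (LinearMap.fst ℝ (Fin n × Bool → ℝ) ℝ)) - LinearMap.snd ℝ (Fin n × Bool → ℝ) ℝ)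
    with hTdef
  have hT : ∀ (lam : Fin n × Bool → ℝ) (s : ℝ),
      T (lam, s) = (∑ j, lam j • y j, (∑ j, lam j * c j) - s) := by
    intro lam s
    simp [hTdef, Fintype.linearCombination_apply, smul_eq_mul]
  set C : Set (EuclideanSpace ℝ (Fin m) × ℝ) :=
    T '' (stdSimplex ℝ (Fin n × Bool) ×ˢ Set.Ici (0:ℝ)) with hCdef
  have hCconv : Convex ℝ C :=
    ((convex_stdSimplex ℝ _).prod (convex_Ici 0)).linear_image T
  have hdisj : Disjoint U C := by
    rw [Set.disjoint_left]
    rintro p hpU ⟨⟨lam, s⟩, ⟨hlam, hs⟩, rfl⟩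
    have hk := key lam hlam.1 hlam.2
    rw [hT] at hpU
    simp only [hUdef, Set.mem_setOf_eq] at hpU
    have hs' : (0:ℝ) ≤ s := hs
    linarith
  obtain ⟨f, r, hfU, hfC⟩ := geometric_hahn_banach_open hUconv hUopen hCconv hdisj
  set a : ℝ := f ((0: EuclideanSpace ℝ (Fin m)), (1:ℝ)) with hadef
  set g : EuclideanSpace ℝ (Fin m) → ℝ := fun yv => f (yv, (0:ℝ)) with hgdef
  have hf : ∀ (yv : EuclideanSpace ℝ (Fin m)) (t : ℝ), f (yv, t) = g yv + t * a := by
    intro yv t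
    have e : ((yv, t) : EuclideanSpace ℝ (Fin m) × ℝ)
        = (yv, 0) + t • ((0: EuclideanSpace ℝ (Fin m)), (1:ℝ)) := by
      simp [Prod.ext_iff]
    rw [e, map_add, map_smul, smul_eq_mul]
  have hg0 : g 0 = 0 := by
    have e : ((0: EuclideanSpace ℝ (Fin m)), (0:ℝ))
        = (0 : EuclideanSpace ℝ (Fin m) × ℝ) := rfl
    simp only [hgdef, e, map_zero]
  have hgsmul : ∀ (R : ℝ) (yv : EuclideanSpace ℝ (Fin m)), g (R • yv) = R * g yv := by
    intro R yv
    have e : ((R • yv, (0:ℝ)) : EuclideanSpace ℝ (Fin m) × ℝ) = R • (yv, 0) := by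
      simp [Prod.ext_iff]
    simp only [hgdef, e, map_smul, smul_eq_mul]
  -- membership of vertices in C
  have hCmem : ∀ (j : Fin n × Bool) (s : ℝ), 0 ≤ s →
      ((y j, c j - s) : EuclideanSpace ℝ (Fin m) × ℝ) ∈ C := by
    intro j s hs
    have hmem : (fun j' => if j' = j then (1:ℝ) else 0) ∈ stdSimplex ℝ (Fin n × Bool) := by
      constructor
      · intro j'
        by_cases h : j' = j <;> simp [h]
      · simp
    refine ⟨((fun j' => if j' = j then 1 else 0), s), ⟨hmem, hs⟩, ?_⟩
    rw [hT]
    have e1 : ∑ j', (if j' = j then (1:ℝ) else 0) • y j' = y j := by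
      simp [ite_smul]
    have e2 : ∑ j', (if j' = j then (1:ℝ) else 0) * c j' = c j := by
      simp [ite_mul]
    rw [e1, e2]
  -- consequences of separation
  have hfC' : ∀ (j : Fin n × Bool) (s : ℝ), 0 ≤ s → r ≤ g (y j) + (c j - s) * a := by
    intro j s hs
    have h := hfC _ (hCmem j s hs)
    rwa [hf] at h
  have hfU' : ∀ (yv : EuclideanSpace ℝ (Fin m)) (t : ℝ),
      L * ‖yv‖ < t → g yv + t * a < r := by
    intro yv t ht
    have h := hfU (yv, t) ht
    rwa [hf] at h
  set j₀ : Fin n × Bool := (⟨0, hn⟩, true) with hj₀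
  -- a ≤ 0
  have ha2 : a ≤ 0 := by
    refine aux_nonpos (K := g (y j₀) + c j₀ * a - r + 1) ?_
    intro s hs
    have h := hfC' j₀ s hs.le
    rw [sub_mul] at h
    linarith
  -- a ≠ 0
  have ha3 : a ≠ 0 := by
    intro h0a
    have hgr : ∀ yv, g yv < r := by
      intro yv
      have h := hfU' yv (L * ‖yv‖ + 1) (by linarith)
      rw [h0a] at h; linarith
    have hgle : ∀ yv, g yv ≤ 0 := by
      intro yv
      refine aux_nonpos (K := r) ?_
      intro R hR
      rw [← hgsmul]
      exact hgr _
    have hrpos : 0 < r := by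
      have h := hfU' 0 1 (by simp)
      rw [hg0, h0a] at h; linarith
    have h := hfC' j₀ 0 le_rfl
    rw [h0a] at h
    have := hgle (y j₀)
    simp at h
    linarith
  have ha : a < 0 := lt_of_le_of_ne ha2 ha3
  have hna : 0 < -a := by linarith
  -- r ≥ 0
  have hr0 : 0 ≤ r := by
    by_contra hr
    push_neg at hr
    have hpos : 0 < r / a := div_pos_of_neg_of_neg hr ha
    have h := hfU' 0 (r / a) (by simpa using hpos)
    rw [hg0, div_mul_cancel₀ _ ha3] at h
    linarith
  -- the norm bound on g
  have hbound : ∀ yv : EuclideanSpace ℝ (Fin m), g yv + a * (L * ‖yv‖) ≤ 0 := by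
    intro yv
    refine aux_nonpos (K := r - a) ?_
    intro R hR
    have hnorm : ‖R • yv‖ = R * ‖yv‖ := by
      rw [norm_smul, Real.norm_eq_abs, abs_of_pos hR]
    have h := hfU' (R • yv) (R * L * ‖yv‖ + 1) (by rw [hnorm]; nlinarith)
    rw [hgsmul] at h
    nlinarith
  -- define u'
  set u' : EuclideanSpace ℝ (Fin m) :=
    (-a)⁻¹ • (InnerProductSpace.toDual ℝ (EuclideanSpace ℝ (Fin m))).symm
      (f.comp (ContinuousLinearMap.inl ℝ (EuclideanSpace ℝ (Fin m)) ℝ)) with hu'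
  have hip : ∀ yv : EuclideanSpace ℝ (Fin m), ⟪u', yv⟫ = (-a)⁻¹ * g yv := by
    intro yv
    rw [hu', real_inner_smul_left, InnerProductSpace.toDual_symm_apply]
    rfl
  have hub : ∀ yv : EuclideanSpace ℝ (Fin m), ⟪u', yv⟫ ≤ L * ‖yv‖ := by
    intro yv
    rw [hip]
    rw [inv_mul_le_iff₀ hna]
    have := hbound yv
    nlinarith
  have hnu : ‖u'‖ ≤ L := by
    have h1 := hub u'
    rw [real_inner_self_eq_norm_mul_norm] at h1
    nlinarith [norm_nonneg u']
  have hlow : ∀ j : Fin n × Bool, c j ≤ ⟪u', y j⟫ := by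
    intro j
    have h := hfC' j 0 le_rfl
    simp only [sub_zero] at h
    rw [hip, le_inv_mul_iff₀ hna]
    nlinarith
  refine ⟨u', hnu, ?_⟩
  intro i
  have hxn : (0:ℝ) < ‖x i‖ := norm_pos_iff.mpr (hx i)
  have hxi : x i = ‖x i‖ • v i := by
    rw [hvdef]
    simp [smul_smul, mul_inv_cancel₀ hxn.ne']
  have h1 : ⟪u, v i⟫ - ε * L ≤ ⟪u', P (v i)⟫ := by
    have := hlow (i, true)
    simpa [hcdef, hydef, hwdef] using this
  have h2 : ⟪u, -v i⟫ - ε * L ≤ ⟪u', P (-v i)⟫ := by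
    have := hlow (i, false)
    simpa [hcdef, hydef, hwdef] using this
  have h2' : ⟪u', P (v i)⟫ - ⟪u, v i⟫ ≤ ε * L := by
    rw [map_neg, inner_neg_right, inner_neg_right] at h2
    linarith
  have habs : |⟪u', P (v i)⟫ - ⟪u, v i⟫| ≤ ε * L := abs_le.mpr ⟨by linarith, h2'⟩
  have e1 : ⟪u', P (x i)⟫ = ‖x i‖ * ⟪u', P (v i)⟫ := by
    conv_lhs => rw [hxi]
    rw [map_smul, real_inner_smul_right]
  have e2 : ⟪u, x i⟫ = ‖x i‖ * ⟪u, v i⟫ := by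
    conv_lhs => rw [hxi]
    rw [real_inner_smul_right]
  rw [e1, e2, ← mul_sub, abs_mul, abs_of_pos hxn]
  calc ‖x i‖ * |⟪u', P (v i)⟫ - ⟪u, v i⟫| ≤ ‖x i‖ * (ε * L) :=
        mul_le_mul_of_nonneg_left habs hxn.le
    _ = ε * L * ‖x i‖ := by ring
end

section
/- Let X ⊆ ℝ^d, ε ∈ (0,1), and let Π : ℝ^d → ℝ^m provide (ε/6)-convex-hull distortion for the unit secants S_X. Then for every u ∈ ℝ^d with nearest point u_NN in the closure of X, there exists u′ ∈ ℝ^m such that ‖u′‖ ≤ ‖u − u_NN‖ and |⟨u′, Π(x − u_NN)⟩ − ⟨u − u_NN, x − u_NN⟩| ≤ ε‖u − u_NN‖‖x − u_NN‖ for all x ∈ X. -/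
open scoped RealInnerProductSpace
open Filter Topology


set_option maxHeartbeats 1000000 in
lemma sep_core {m : ℕ} (r : ℝ) (hr : 0 ≤ r)
    (M : Set (EuclideanSpace ℝ (Fin m) × ℝ)) (hM : Convex ℝ M) (hMne : M.Nonempty)
    (hbd : ∀ p ∈ M, p.2 ≤ r * ‖p.1‖) :
    ∃ u' : EuclideanSpace ℝ (Fin m), ‖u'‖ ≤ r ∧ ∀ p ∈ M, p.2 ≤ ⟪u', p.1⟫ := by
  classical
  set G : Set (EuclideanSpace ℝ (Fin m) × ℝ) := {p | r * ‖p.1‖ < p.2} with hGdef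
  have hGopen : IsOpen G := isOpen_lt (by fun_prop) continuous_snd
  have hGconv : Convex ℝ G := by
    intro p hp q hq a b ha hb hab
    have hp' : r * ‖p.1‖ < p.2 := hp
    have hq' : r * ‖q.1‖ < q.2 := hq
    have hnorm : ‖(a • p + b • q).1‖ ≤ a * ‖p.1‖ + b * ‖q.1‖ := by
      have h0 : (a • p + b • q).1 = a • p.1 + b • q.1 := rfl
      rw [h0]
      calc ‖a • p.1 + b • q.1‖ ≤ ‖a • p.1‖ + ‖b • q.1‖ := norm_add_le _ _
        _ = a * ‖p.1‖ + b * ‖q.1‖ := by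
            rw [norm_smul, norm_smul, Real.norm_eq_abs, Real.norm_eq_abs,
              abs_of_nonneg ha, abs_of_nonneg hb]
    have hsnd : (a • p + b • q).2 = a * p.2 + b * q.2 := rfl
    have key : a * (r * ‖p.1‖) + b * (r * ‖q.1‖) < a * p.2 + b * q.2 := by
      rcases ha.lt_or_eq with ha' | ha'
      · have h1 : a * (r * ‖p.1‖) < a * p.2 := mul_lt_mul_of_pos_left hp' ha'
        have h2 : b * (r * ‖q.1‖) ≤ b * q.2 := mul_le_mul_of_nonneg_left hq'.le hb
        linarith
      · have hb1 : b = 1 := by linarith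
        rw [← ha', hb1]; simpa using hq'
    show r * ‖(a • p + b • q).1‖ < (a • p + b • q).2
    rw [hsnd]
    nlinarith [hnorm]
  have hdisj : Disjoint G M := by
    rw [Set.disjoint_left]
    intro p hpG hpM
    exact absurd (hbd p hpM) (not_le.2 hpG)
  obtain ⟨f, u₀, hfG, hfM⟩ := geometric_hahn_banach_open hGconv hGopen hM hdisj
  set s₀ : ℝ := f (0, 1) with hs₀def
  have hsplit : ∀ (a : EuclideanSpace ℝ (Fin m)) (t : ℝ), f (a, t) = f (a, 0) + t * s₀ := by
    intro a t
    have h0 : (a, t) = (a, (0:ℝ)) + t • ((0 : EuclideanSpace ℝ (Fin m)), (1:ℝ)) := by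
      simp [Prod.ext_iff]
    rw [h0, map_add, map_smul, smul_eq_mul, hs₀def]
  have hzz : f ((0 : EuclideanSpace ℝ (Fin m)), (0:ℝ)) = 0 := by
    have : ((0 : EuclideanSpace ℝ (Fin m)), (0:ℝ)) = (0 : EuclideanSpace ℝ (Fin m) × ℝ) := rfl
    rw [this, map_zero]
  have h1 : ∀ t : ℝ, 0 < t → t * s₀ < u₀ := by
    intro t ht
    have hmem : ((0 : EuclideanSpace ℝ (Fin m)), t) ∈ G := by
      simp only [hGdef, Set.mem_setOf_eq, norm_zero, mul_zero]
      exact ht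
    have := hfG _ hmem
    rwa [hsplit, hzz, zero_add] at this
  have hu₀ : 0 ≤ u₀ := by
    by_contra hneg
    push_neg at hneg
    have hs₀neg : s₀ < 0 := by
      have := h1 1 one_pos
      linarith
    have hs0 : s₀ ≠ 0 := hs₀neg.ne
    have ht : 0 < u₀ / (2 * s₀) := div_pos_of_neg_of_neg hneg (by linarith)
    have := h1 _ ht
    have heq : u₀ / (2 * s₀) * s₀ = u₀ / 2 := by
      field_simp
    rw [heq] at this
    linarith
  have hs₀le : s₀ ≤ 0 := by
    by_contra hpos
    push_neg at hpos
    have ht : 0 < (u₀ + 1) / s₀ := div_pos (by linarith) hpos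
    have := h1 _ ht
    have heq : (u₀ + 1) / s₀ * s₀ = u₀ + 1 := by field_simp
    rw [heq] at this
    linarith
  have hA : ∀ a : EuclideanSpace ℝ (Fin m), f (a, 0) + r * ‖a‖ * s₀ ≤ u₀ := by
    intro a
    by_contra h
    push_neg at h
    set c : ℝ := f (a, 0) + r * ‖a‖ * s₀ - u₀ with hc
    have hcpos : 0 < c := by simp only [hc]; linarith
    rcases hs₀le.lt_or_eq with hs' | hs'
    · have hs0 : s₀ ≠ 0 := hs'.ne
      set δ : ℝ := c / (-2 * s₀) with hδ
      have hδpos : 0 < δ := div_pos hcpos (by linarith)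
      have hmem : (a, r * ‖a‖ + δ) ∈ G := by
        simp only [hGdef, Set.mem_setOf_eq]
        linarith
      have hval := hfG _ hmem
      rw [hsplit] at hval
      have hδs : δ * s₀ = -c / 2 := by
        rw [hδ]; field_simp
      have hexp : (r * ‖a‖ + δ) * s₀ = r * ‖a‖ * s₀ + δ * s₀ := by ring
      rw [hexp, hδs] at hval
      linarith
    · have hmem : (a, r * ‖a‖ + 1) ∈ G := by
        simp only [hGdef, Set.mem_setOf_eq]
        linarith
      have hval := hfG _ hmem
      rw [hsplit] at hval
      rw [hs'] at hval h
      nlinarith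
  have hB : ∀ a : EuclideanSpace ℝ (Fin m), f (a, 0) ≤ (-s₀) * (r * ‖a‖) := by
    intro a
    by_contra h
    push_neg at h
    set c : ℝ := f (a, 0) + r * ‖a‖ * s₀ with hc
    have hcpos : 0 < c := by simp only [hc]; nlinarith
    set lam : ℝ := (u₀ + 1) / c with hlam
    have hlampos : 0 < lam := div_pos (by linarith) hcpos
    have hsc : (lam • a, (0:ℝ)) = lam • (a, (0:ℝ)) := by simp [Prod.ext_iff]
    have hfl : f (lam • a, (0:ℝ)) = lam * f (a, 0) := by
      rw [hsc, map_smul, smul_eq_mul]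
    have hnl : ‖lam • a‖ = lam * ‖a‖ := by
      rw [norm_smul, Real.norm_eq_abs, abs_of_pos hlampos]
    have hAl := hA (lam • a)
    rw [hfl, hnl] at hAl
    have hlc : lam * c = u₀ + 1 := by
      rw [hlam]; field_simp
    nlinarith
  have hs₀lt : s₀ < 0 := by
    rcases hs₀le.lt_or_eq with h | h
    · exact h
    · exfalso
      have hf0 : ∀ a : EuclideanSpace ℝ (Fin m), f (a, 0) = 0 := by
        intro a
        have h1' := hB a
        have h2' := hB (-a)
        have hneg : ((-a : EuclideanSpace ℝ (Fin m)), (0:ℝ)) = -(a, (0:ℝ)) := by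
          simp [Prod.ext_iff]
        rw [hneg, map_neg, norm_neg] at h2'
        rw [h] at h1' h2'
        simp at h1' h2'
        linarith
      obtain ⟨p₀, hp₀⟩ := hMne
      have h2 := hfM p₀ hp₀
      have h3 : f p₀ = 0 := by
        have hp : p₀ = (p₀.1, p₀.2) := rfl
        rw [hp, hsplit, hf0, h]
        ring
      rw [h3] at h2
      have hmem : ((0 : EuclideanSpace ℝ (Fin m)), (1:ℝ)) ∈ G := by
        simp only [hGdef, Set.mem_setOf_eq, norm_zero, mul_zero]
        norm_num
      have h4 := hfG _ hmem
      have h5 : s₀ < u₀ := by rw [hs₀def]; exact h4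
      rw [h] at h5
      linarith
  set φ : EuclideanSpace ℝ (Fin m) →L[ℝ] ℝ :=
    f.comp (ContinuousLinearMap.inl ℝ (EuclideanSpace ℝ (Fin m)) ℝ) with hφ
  set w : EuclideanSpace ℝ (Fin m) :=
    (InnerProductSpace.toDual ℝ (EuclideanSpace ℝ (Fin m))).symm φ with hw
  have hwip : ∀ a : EuclideanSpace ℝ (Fin m), ⟪w, a⟫ = f (a, 0) := by
    intro a
    rw [hw, InnerProductSpace.toDual_symm_apply, hφ]
    simp
  have hwnorm : ‖w‖ ≤ (-s₀) * r := by
    have h1' := hB w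
    have h2' : ⟪w, w⟫ = f (w, 0) := hwip w
    have h3' : ‖w‖ ^ 2 ≤ (-s₀) * (r * ‖w‖) := by
      rw [← real_inner_self_eq_norm_sq, h2']; exact h1'
    rcases eq_or_lt_of_le (norm_nonneg w) with h | h
    · rw [← h]; exact mul_nonneg (by linarith) hr
    · nlinarith
  have hinvpos : (0:ℝ) < (-s₀)⁻¹ := inv_pos.2 (by linarith)
  refine ⟨(-s₀)⁻¹ • w, ?_, ?_⟩
  · rw [norm_smul, Real.norm_eq_abs, abs_of_pos hinvpos]
    calc (-s₀)⁻¹ * ‖w‖ ≤ (-s₀)⁻¹ * ((-s₀) * r) :=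
          mul_le_mul_of_nonneg_left hwnorm hinvpos.le
      _ = r := inv_mul_cancel_left₀ (by linarith) r
  · intro p hp
    have h2 := hfM p hp
    have h3 : f p = f (p.1, 0) + p.2 * s₀ := by
      conv_lhs => rw [show p = (p.1, p.2) from rfl]
      rw [hsplit]
    rw [h3] at h2
    have h4 : p.2 * (-s₀) ≤ f (p.1, 0) := by nlinarith
    have h5 : ⟪(-s₀)⁻¹ • w, p.1⟫ = (-s₀)⁻¹ * f (p.1, 0) := by
      rw [real_inner_smul_left, hwip]
    rw [h5]
    calc p.2 = (-s₀)⁻¹ * (p.2 * (-s₀)) := by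
          rw [mul_comm (p.2) (-s₀), inv_mul_cancel_left₀ (by linarith : -s₀ ≠ (0:ℝ))]
      _ ≤ (-s₀)⁻¹ * f (p.1, 0) := mul_le_mul_of_nonneg_left h4 hinvpos.le

/-- existence of a terminal extension point `u'` for arbitrary `X ⊆ ℝ^d`
(Lemma 3.4 of Chiclana–Iwen). -/
theorem stmt13 {d m : ℕ} (X : Set (EuclideanSpace ℝ (Fin d))) (ε : ℝ)
    (hε : ε ∈ Set.Ioo (0:ℝ) 1)
    (SX : Set (EuclideanSpace ℝ (Fin d)))
    (hSX : SX = closure {s : EuclideanSpace ℝ (Fin d) |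
      ∃ x ∈ X, ∃ y ∈ X, x ≠ y ∧ s = ‖x - y‖⁻¹ • (x - y)})
    (P : EuclideanSpace ℝ (Fin d) →ₗ[ℝ] EuclideanSpace ℝ (Fin m))
    (hP : ∀ s ∈ convexHull ℝ SX, |‖P s‖ - ‖s‖| < ε / 6)
    (u uNN : EuclideanSpace ℝ (Fin d))
    (huNN : uNN ∈ closure X ∧ ∀ x ∈ closure X, ‖u - uNN‖ ≤ ‖u - x‖) :
    ∃ u' : EuclideanSpace ℝ (Fin m), ‖u'‖ ≤ ‖u - uNN‖ ∧
      ∀ x ∈ X, |⟪u', P (x - uNN)⟫ - ⟪u - uNN, x - uNN⟫| ≤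
        ε * ‖u - uNN‖ * ‖x - uNN‖ := by
  obtain ⟨hcl, -⟩ := huNN
  have hε0 : 0 < ε := hε.1
  set r := ‖u - uNN‖ with hrdef
  have hr : 0 ≤ r := norm_nonneg _
  -- unit secants with foot uNN belong to SX
  have hmem : ∀ x ∈ X, x ≠ uNN → (‖x - uNN‖⁻¹ • (x - uNN)) ∈ SX := by
    intro x hx hxne
    obtain ⟨y, hyX, hy⟩ := mem_closure_iff_seq_limit.mp hcl
    have hne : x - uNN ≠ 0 := sub_ne_zero.2 hxne
    have hcont : ContinuousAt
        (fun w : EuclideanSpace ℝ (Fin d) => ‖x - w‖⁻¹ • (x - w)) uNN := by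
      have h1 : ContinuousAt (fun w : EuclideanSpace ℝ (Fin d) => x - w) uNN :=
        (continuous_const.sub continuous_id).continuousAt
      have h2 : ContinuousAt (fun w : EuclideanSpace ℝ (Fin d) => ‖x - w‖⁻¹) uNN :=
        h1.norm.inv₀ (by simpa using hne)
      exact h2.smul h1
    have hten : Filter.Tendsto (fun n => ‖x - y n‖⁻¹ • (x - y n)) atTop
        (𝓝 (‖x - uNN‖⁻¹ • (x - uNN))) := hcont.tendsto.comp hy
    have hev : ∀ᶠ n in atTop, (‖x - y n‖⁻¹ • (x - y n)) ∈
        {s : EuclideanSpace ℝ (Fin d) |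
          ∃ a ∈ X, ∃ b ∈ X, a ≠ b ∧ s = ‖a - b‖⁻¹ • (a - b)} := by
      have hyne : ∀ᶠ n in atTop, y n ≠ x := hy.eventually_ne (Ne.symm hxne)
      filter_upwards [hyne] with n hn
      exact ⟨x, hx, y n, hyX n, fun h => hn h.symm, rfl⟩
    rw [hSX]
    exact mem_closure_of_tendsto hten hev
  -- SX is symmetric
  have hsymm : ∀ s ∈ SX, -s ∈ SX := by
    intro s hs
    rw [hSX] at hs ⊢
    obtain ⟨t, ht, htend⟩ := mem_closure_iff_seq_limit.mp hs
    refine mem_closure_of_tendsto htend.neg (Filter.Eventually.of_forall fun n => ?_)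
    obtain ⟨a, ha, b, hb, hab, heq⟩ := ht n
    refine ⟨b, hb, a, ha, fun h => hab h.symm, ?_⟩
    rw [heq, norm_sub_rev a b, ← neg_sub a b, smul_neg]
  by_cases htriv : ∀ x ∈ X, x = uNN
  · refine ⟨0, by simpa using hr, ?_⟩
    intro x hx
    rw [htriv x hx]
    simp
  · push_neg at htriv
    obtain ⟨x₀, hx₀X, hx₀⟩ := htriv
    have hSXne : SX.Nonempty := ⟨_, hmem x₀ hx₀X hx₀⟩
    have hCconv : Convex ℝ (convexHull ℝ SX) := convex_convexHull ℝ SX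
    set M : Set (EuclideanSpace ℝ (Fin m) × ℝ) :=
      (fun z => (P z, ⟪u - uNN, z⟫ - ε * r)) '' (convexHull ℝ SX) with hM
    have hMconv : Convex ℝ M := by
      rintro _ ⟨z₁, hz₁, rfl⟩ _ ⟨z₂, hz₂, rfl⟩ a b ha hb hab
      refine ⟨a • z₁ + b • z₂, hCconv hz₁ hz₂ ha hb hab, ?_⟩
      have h1 : P (a • z₁ + b • z₂) = a • P z₁ + b • P z₂ := by
        rw [map_add, map_smul, map_smul]
      refine Prod.ext h1 ?_
      show ⟪u - uNN, a • z₁ + b • z₂⟫ - ε * r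
        = a * (⟪u - uNN, z₁⟫ - ε * r) + b * (⟪u - uNN, z₂⟫ - ε * r)
      rw [inner_add_right, real_inner_smul_right, real_inner_smul_right]
      linear_combination (ε * r) * hab
    have hMne : M.Nonempty := by
      obtain ⟨σ₀, hσ₀⟩ := hSXne
      exact ⟨_, ⟨σ₀, subset_convexHull ℝ SX hσ₀, rfl⟩⟩
    have hbd : ∀ p ∈ M, p.2 ≤ r * ‖p.1‖ := by
      rintro _ ⟨z, hz, rfl⟩
      have h1 := hP z hz
      have h2 : ⟪u - uNN, z⟫ ≤ r * ‖z‖ := real_inner_le_norm (u - uNN) z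
      have h3 : ‖z‖ ≤ ‖P z‖ + ε / 6 := by
        have := abs_lt.mp h1
        linarith [this.1]
      show ⟪u - uNN, z⟫ - ε * r ≤ r * ‖P z‖
      nlinarith [mul_le_mul_of_nonneg_left h3 hr, mul_nonneg hr hε0.le]
    obtain ⟨u', hu'norm, hu'⟩ := sep_core r hr M hMconv hMne hbd
    refine ⟨u', hu'norm, ?_⟩
    have key : ∀ s ∈ SX, |⟪u', P s⟫ - ⟪u - uNN, s⟫| ≤ ε * r := by
      intro s hsSX
      have hlow := hu' _ ⟨s, subset_convexHull ℝ SX hsSX, rfl⟩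
      have hupp := hu' _ ⟨-s, subset_convexHull ℝ SX (hsymm s hsSX), rfl⟩
      simp only at hlow hupp
      have e1 : ⟪u - uNN, -s⟫ = -⟪u - uNN, s⟫ := inner_neg_right _ _
      have e2 : ⟪u', P (-s)⟫ = -⟪u', P s⟫ := by rw [map_neg, inner_neg_right]
      rw [e1, e2] at hupp
      rw [abs_le]
      constructor <;> linarith
    intro x hx
    by_cases hxe : x = uNN
    · subst hxe
      simp
    · have hsX := hmem x hx hxe
      have hn : 0 < ‖x - uNN‖ := norm_pos_iff.2 (sub_ne_zero.2 hxe)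
      set s : EuclideanSpace ℝ (Fin d) := ‖x - uNN‖⁻¹ • (x - uNN) with hsdef
      have hxs : x - uNN = ‖x - uNN‖ • s := by
        rw [hsdef, smul_smul, mul_inv_cancel₀ hn.ne', one_smul]
      have hk := key s hsX
      calc |⟪u', P (x - uNN)⟫ - ⟪u - uNN, x - uNN⟫|
          = ‖x - uNN‖ * |⟪u', P s⟫ - ⟪u - uNN, s⟫| := by
            rw [hxs, map_smul, real_inner_smul_right, real_inner_smul_right,
              ← mul_sub, abs_mul, abs_of_pos hn, norm_smul, Real.norm_eq_abs,
              abs_of_pos hn, hsdef, norm_smul, norm_inv, norm_norm,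
              inv_mul_cancel₀ hn.ne', mul_one]
        _ ≤ ‖x - uNN‖ * (ε * r) := mul_le_mul_of_nonneg_left hk hn.le
        _ = ε * r * ‖x - uNN‖ := by ring
end

section
/- Let ε ∈ (0,1) and let β : ℝ^d → ℝ^m satisfy: (i) ‖β(u)‖ ≤ ‖u − u_NN‖ for all u; and suppose v, w satisfy ‖w − v‖ ≥ (ε/480)‖v − v_NN‖ and ‖(w − w_NN) − (v − v_NN)‖ ≤ 3‖w − v‖, with ‖w − v‖ ≤ 1. Then ‖β(w) − β(v)‖ ≤ (963/ε)‖w − v‖^{1/2}. -/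
/-- Hölder estimate in the separated regime `‖w - v‖ ≥ (ε/480)‖v - v_NN‖`. -/
theorem stmt16 {d m : ℕ} (ε : ℝ) (hε : ε ∈ Set.Ioo (0:ℝ) 1)
    (nn : EuclideanSpace ℝ (Fin d) → EuclideanSpace ℝ (Fin d))
    (β : EuclideanSpace ℝ (Fin d) → EuclideanSpace ℝ (Fin m))
    (hβ : ∀ u : EuclideanSpace ℝ (Fin d), ‖β u‖ ≤ ‖u - nn u‖)
    (v w : EuclideanSpace ℝ (Fin d))
    (hsep : ‖w - v‖ ≥ (ε / 480) * ‖v - nn v‖)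
    (hlip : ‖(w - nn w) - (v - nn v)‖ ≤ 3 * ‖w - v‖)
    (hclose : ‖w - v‖ ≤ 1) :
    ‖β w - β v‖ ≤ (963 / ε) * ‖w - v‖ ^ ((1:ℝ)/2) := by
  obtain ⟨hε0, hε1⟩ := hε
  set t := ‖w - v‖ with ht
  have ht0 : 0 ≤ t := norm_nonneg _
  rcases eq_or_lt_of_le ht0 with h0 | hpos
  · -- t = 0, so w = v
    have hwv : w = v := by
      have : w - v = 0 := by
        have := norm_eq_zero.mp h0.symm
        exact this
      exact sub_eq_zero.mp this
    subst hwv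
    simp only [sub_self, norm_zero]
    positivity
  · have hvnn : ‖v - nn v‖ ≤ (480 / ε) * t := by
      have h480 : (0:ℝ) < 480 / ε := by positivity
      rw [ge_iff_le, div_mul_eq_mul_div, div_le_iff₀ (by norm_num)] at hsep
      rw [div_mul_eq_mul_div, le_div_iff₀ hε0]
      nlinarith
    have hwnn : ‖w - nn w‖ ≤ (480 / ε) * t + 3 * t := by
      calc ‖w - nn w‖ ≤ ‖(w - nn w) - (v - nn v)‖ + ‖v - nn v‖ := by
            have := norm_sub_le ((w - nn w) - (v - nn v)) (-(v - nn v))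
            have h := norm_le_norm_add_norm_sub' (w - nn w) (v - nn v)
            linarith
        _ ≤ 3 * t + (480 / ε) * t := by linarith
        _ = (480 / ε) * t + 3 * t := by ring
    have hβwv : ‖β w - β v‖ ≤ (963 / ε) * t := by
      have h1 := hβ w
      have h2 := hβ v
      have h3 := norm_sub_le (β w) (β v)
      have h4 : 3 * t ≤ (3 / ε) * t := by
        rw [div_mul_eq_mul_div, le_div_iff₀ hε0]
        nlinarith
      have : ‖β w - β v‖ ≤ (480 / ε) * t + 3 * t + (480 / ε) * t := by linarith
      calc ‖β w - β v‖ ≤ (480 / ε) * t + (3 / ε) * t + (480 / ε) * t := by linarith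
        _ = (963 / ε) * t := by ring
    have htle : t ≤ t ^ ((1:ℝ)/2) := by
      nth_rewrite 1 [← Real.rpow_one t]
      exact Real.rpow_le_rpow_of_exponent_ge hpos hclose (by norm_num)
    calc ‖β w - β v‖ ≤ (963 / ε) * t := hβwv
      _ ≤ (963 / ε) * t ^ ((1:ℝ)/2) := by
          apply mul_le_mul_of_nonneg_left htle
          positivity
end
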